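/- arXiv:1109.0441 — 5 statements merged into one kernel-verified Lean document; each statement's English description precedes it below -/
import Mathlib

section
/- In a complete CAT(0) space, any nested non-increasing sequence of non-empty closed convex bounded subsets has non-empty intersection. -/
/-!
Fix a base point `x` and let `d` be the limit of the increasing bounded sequence
`infDist x (A n)`. Choose `a n ∈ A n` with `dist x (a n) → d`. The midpoint of `a m` and `a n`
lies in `A (min m n)`, so the Bruhat–Tits inequality gives
`dist (a m) (a n)² ≤ 2 dist x (a m)² + 2 dist x (a n)² - 4 infDist x (A (min m n))²`, whose
right side tends to `4d² - 4d² = 0`. Hence `a` is Cauchy, and its limit lies in every closed `A n`.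
-/

/-- A complete CAT(0) structure on a metric space, given by a midpoint map
satisfying the Bruhat–Tits inequality. -/
structure CatZero (X : Type*) [MetricSpace X] where
  mid : X → X → X
  dist_left : ∀ y z, dist (mid y z) y = dist y z / 2
  dist_right : ∀ y z, dist (mid y z) z = dist y z / 2
  bruhat_tits : ∀ x y z, dist x (mid y z) ^ 2 ≤
    (dist x y ^ 2 + dist x z ^ 2) / 2 - dist y z ^ 2 / 4

open Filter Topology Metric

section Metric

variable {X : Type*} [MetricSpace X]

theorem tendsto_infDist_ciSup_of_antitone {A : ℕ → Set X} (hA : Antitone A)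
    (hne : ∀ n, (A n).Nonempty) (hbd : Bornology.IsBounded (A 0)) (x : X) :
    Tendsto (fun n => infDist x (A n)) atTop (𝓝 (⨆ n, infDist x (A n))) := by
  obtain ⟨R, hR⟩ := hbd.subset_closedBall x
  refine tendsto_atTop_ciSup (fun m n hmn => infDist_le_infDist_of_subset (hA hmn) (hne n))
    ⟨R, ?_⟩
  rintro _ ⟨n, rfl⟩
  obtain ⟨y, hy⟩ := hne n
  calc infDist x (A n) ≤ dist x y := infDist_le_dist_of_mem hy
    _ ≤ R := by rw [dist_comm]; exact hR (hA n.zero_le hy)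

theorem exists_mem_tendsto_dist_of_tendsto_infDist {A : ℕ → Set X}
    (hne : ∀ n, (A n).Nonempty) {x : X} {d : ℝ}
    (hinf : Tendsto (fun n => infDist x (A n)) atTop (𝓝 d)) :
    ∃ a : ℕ → X, (∀ n, a n ∈ A n) ∧ Tendsto (fun n => dist x (a n)) atTop (𝓝 d) := by
  choose a ha hlt using fun n : ℕ => (infDist_lt_iff (hne n)).1
    (lt_add_of_pos_right (infDist x (A n)) (Nat.one_div_pos_of_nat (n := n)))
  refine ⟨a, ha, tendsto_of_tendsto_of_tendsto_of_le_of_le hinf ?_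
    (fun n => infDist_le_dist_of_mem (ha n)) fun n => (hlt n).le⟩
  simpa using hinf.add tendsto_one_div_add_atTop_nhds_zero_nat

end Metric

namespace CatZero

variable {X : Type*} [MetricSpace X] (c : CatZero X)

def MidConvex (s : Set X) : Prop := ∀ y ∈ s, ∀ z ∈ s, c.mid y z ∈ s

theorem dist_sq_le_of_midConvex {s : Set X} (hs : c.MidConvex s) {y z : X} (hy : y ∈ s)
    (hz : z ∈ s) (x : X) :
    dist y z ^ 2 ≤ 2 * dist x y ^ 2 + 2 * dist x z ^ 2 - 4 * infDist x s ^ 2 := by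
  have hmid : infDist x s ^ 2 ≤ dist x (c.mid y z) ^ 2 :=
    pow_le_pow_left₀ infDist_nonneg (infDist_le_dist_of_mem (hs y hy z hz)) 2
  linarith [c.bruhat_tits x y z]

theorem cauchySeq_of_tendsto_dist {A : ℕ → Set X} (hA : Antitone A)
    (hconv : ∀ n, c.MidConvex (A n)) {a : ℕ → X} (ha : ∀ n, a n ∈ A n) {x : X} {d : ℝ}
    (hinf : Tendsto (fun n => infDist x (A n)) atTop (𝓝 d))
    (hdist : Tendsto (fun n => dist x (a n)) atTop (𝓝 d)) : CauchySeq a := by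
  rw [cauchySeq_iff_tendsto_dist_atTop_0, ← prod_atTop_atTop_eq]
  have hbound : ∀ p : ℕ × ℕ, dist (a p.1) (a p.2) ^ 2 ≤
      2 * dist x (a p.1) ^ 2 + 2 * dist x (a p.2) ^ 2 - 4 * infDist x (A (p.1 ⊓ p.2)) ^ 2 :=
    fun p => c.dist_sq_le_of_midConvex (hconv _) (hA inf_le_left (ha p.1))
      (hA inf_le_right (ha p.2)) x
  have hmin : Tendsto (fun p : ℕ × ℕ => p.1 ⊓ p.2) (atTop ×ˢ atTop) atTop :=
    tendsto_inf_atTop _ tendsto_fst tendsto_snd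
  have hlim : Tendsto (fun p : ℕ × ℕ => 2 * dist x (a p.1) ^ 2 + 2 * dist x (a p.2) ^ 2 -
      4 * infDist x (A (p.1 ⊓ p.2)) ^ 2) (atTop ×ˢ atTop) (𝓝 0) := by
    have := ((((hdist.comp tendsto_fst).pow 2).const_mul 2).add
      (((hdist.comp tendsto_snd).pow 2).const_mul 2)).sub
      (((hinf.comp hmin).pow 2).const_mul 4)
    rwa [show 2 * d ^ 2 + 2 * d ^ 2 - 4 * d ^ 2 = 0 by ring] at this
  have hsq : Tendsto (fun p : ℕ × ℕ => dist (a p.1) (a p.2) ^ 2) (atTop ×ˢ atTop) (𝓝 0) :=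
    squeeze_zero (fun _ => sq_nonneg _) hbound hlim
  simpa [Real.sqrt_sq dist_nonneg] using hsq.sqrt

end CatZero

/-- In a complete CAT(0) space, any nested non-increasing sequence of non-empty
closed convex bounded subsets has non-empty intersection. -/
theorem stmt0 {X : Type*} [MetricSpace X] [CompleteSpace X] (c : CatZero X)
    (A : ℕ → Set X)
    (hne : ∀ n, (A n).Nonempty)
    (hcl : ∀ n, IsClosed (A n))
    (hconv : ∀ n, ∀ y ∈ A n, ∀ z ∈ A n, c.mid y z ∈ A n)
    (hbd : ∀ n, Bornology.IsBounded (A n))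
    (hmono : ∀ n, A (n + 1) ⊆ A n) :
    (⋂ n, A n).Nonempty := by
  have hA : Antitone A := antitone_nat_of_succ_le hmono
  obtain ⟨x, -⟩ := hne 0
  have hinf := tendsto_infDist_ciSup_of_antitone hA hne (hbd 0) x
  obtain ⟨a, ha, hdist⟩ := exists_mem_tendsto_dist_of_tendsto_infDist hne hinf
  obtain ⟨p, hp⟩ :=
    cauchySeq_tendsto_of_complete (c.cauchySeq_of_tendsto_dist hA hconv ha hinf hdist)
  refine ⟨p, Set.mem_iInter.2 fun n => (hcl n).mem_of_tendsto hp ?_⟩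
  exact eventually_atTop.2 ⟨n, fun m hm => hA hm (ha m)⟩
end

section
/- In a complete CAT(0) space, every non-empty bounded subset has a unique circumcenter, i.e., a unique point x such that the subset is contained in the closed ball of radius rad(Y) around x, where rad(Y) is the circumradius. -/
/-- The circumradius of a subset of a metric space. -/
noncomputable def circumradius {X : Type*} [MetricSpace X] (Y : Set X) : ℝ :=
  sInf {r : ℝ | 0 ≤ r ∧ ∃ x : X, Y ⊆ Metric.closedBall x r}

open Metric Filter Topology

section

variable {X : Type*} [MetricSpace X] {Y : Set X}

def coveringCenters (Y : Set X) (s : ℝ) : Set X :=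
  {x | Y ⊆ closedBall x s}

lemma coveringCenters_eq_biInter (Y : Set X) (s : ℝ) :
    coveringCenters Y s = ⋂ y ∈ Y, closedBall y s := by
  ext x
  simp [coveringCenters, Set.subset_def, dist_comm]

lemma isClosed_coveringCenters (Y : Set X) (s : ℝ) : IsClosed (coveringCenters Y s) := by
  rw [coveringCenters_eq_biInter]
  exact isClosed_biInter fun y _ => isClosed_closedBall

lemma coveringCenters_mono (Y : Set X) : Monotone (coveringCenters Y) :=
  fun _ _ hst _ hx => hx.trans (closedBall_subset_closedBall hst)

lemma circumradius_nonneg (Y : Set X) : 0 ≤ circumradius Y :=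
  Real.sInf_nonneg fun _ hr => hr.1

lemma circumradius_le {x : X} {r : ℝ} (hr : 0 ≤ r) (hY : Y ⊆ closedBall x r) :
    circumradius Y ≤ r :=
  csInf_le ⟨0, fun _ hs => hs.1⟩ ⟨hr, x, hY⟩

lemma coveringCenters_nonempty_of_circumradius_lt (hne : Y.Nonempty)
    (hbd : Bornology.IsBounded Y) {s : ℝ} (hs : circumradius Y < s) :
    (coveringCenters Y s).Nonempty := by
  obtain ⟨y₀, hy₀⟩ := hne
  obtain ⟨R, hR⟩ := hbd.subset_closedBall y₀
  have hradii : {r : ℝ | 0 ≤ r ∧ ∃ x : X, Y ⊆ closedBall x r}.Nonempty :=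
    ⟨max R 0, le_max_right R 0, y₀, hR.trans (closedBall_subset_closedBall (le_max_left R 0))⟩
  obtain ⟨r, ⟨-, x, hx⟩, hrs⟩ := exists_lt_of_csInf_lt hradii hs
  exact ⟨x, coveringCenters_mono Y hrs.le hx⟩

lemma mem_coveringCenters_of_forall_one_div_add {x : X} {r : ℝ}
    (hx : ∀ n : ℕ, x ∈ coveringCenters Y (r + 1 / (n + 1))) : x ∈ coveringCenters Y r := by
  intro y hy
  have hlim : Tendsto (fun n : ℕ => r + 1 / ((n : ℝ) + 1)) atTop (𝓝 r) := by
    simpa using tendsto_one_div_add_atTop_nhds_zero_nat.const_add r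
  exact ge_of_tendsto' hlim fun n => hx n hy

namespace CatZero

lemma dist_mid_sq_le (c : CatZero X) {x₁ x₂ y : X} {a b : ℝ} (ha : dist y x₁ ≤ a)
    (hb : dist y x₂ ≤ b) :
    dist y (c.mid x₁ x₂) ^ 2 ≤ (a ^ 2 + b ^ 2) / 2 - dist x₁ x₂ ^ 2 / 4 := by
  have ha' : dist y x₁ ^ 2 ≤ a ^ 2 := pow_le_pow_left₀ dist_nonneg ha 2
  have hb' : dist y x₂ ^ 2 ≤ b ^ 2 := pow_le_pow_left₀ dist_nonneg hb 2
  linarith [c.bruhat_tits y x₁ x₂]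

lemma dist_sq_le_of_mem_coveringCenters (c : CatZero X) (hne : Y.Nonempty) {x₁ x₂ : X}
    {a b : ℝ} (h₁ : x₁ ∈ coveringCenters Y a) (h₂ : x₂ ∈ coveringCenters Y b) :
    dist x₁ x₂ ^ 2 ≤ 2 * a ^ 2 + 2 * b ^ 2 - 4 * circumradius Y ^ 2 := by
  set t := (a ^ 2 + b ^ 2) / 2 - dist x₁ x₂ ^ 2 / 4 with ht_def
  have hmid : ∀ y ∈ Y, dist y (c.mid x₁ x₂) ^ 2 ≤ t := fun y hy =>
    c.dist_mid_sq_le (mem_closedBall.1 (h₁ hy)) (mem_closedBall.1 (h₂ hy))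
  obtain ⟨y₀, hy₀⟩ := hne
  have ht : 0 ≤ t := (sq_nonneg _).trans (hmid y₀ hy₀)
  have hball : Y ⊆ closedBall (c.mid x₁ x₂) (√t) := fun y hy =>
    mem_closedBall.2 (Real.le_sqrt_of_sq_le (hmid y hy))
  have hr : circumradius Y ^ 2 ≤ t := by
    simpa [Real.sq_sqrt ht] using
      pow_le_pow_left₀ (circumradius_nonneg Y) (circumradius_le (Real.sqrt_nonneg t) hball) 2
  linarith [ht_def]

lemma diam_coveringCenters_le (c : CatZero X) (hne : Y.Nonempty) (s : ℝ) :
    diam (coveringCenters Y s) ≤ √(4 * s ^ 2 - 4 * circumradius Y ^ 2) :=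
  diam_le_of_forall_dist_le (Real.sqrt_nonneg _) fun _ h₁ _ h₂ =>
    Real.le_sqrt_of_sq_le (by linarith [c.dist_sq_le_of_mem_coveringCenters hne h₁ h₂])

lemma isBounded_coveringCenters (c : CatZero X) (hne : Y.Nonempty) (s : ℝ) :
    Bornology.IsBounded (coveringCenters Y s) :=
  isBounded_iff.2 ⟨√(4 * s ^ 2 - 4 * circumradius Y ^ 2), fun _ h₁ _ h₂ =>
    Real.le_sqrt_of_sq_le (by linarith [c.dist_sq_le_of_mem_coveringCenters hne h₁ h₂])⟩

lemma coveringCenters_circumradius_subsingleton (c : CatZero X) (hne : Y.Nonempty) :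
    (coveringCenters Y (circumradius Y)).Subsingleton := fun _ h₁ _ h₂ =>
  dist_eq_zero.1 <| (sq_nonpos_iff _).1 <| by
    linarith [c.dist_sq_le_of_mem_coveringCenters hne h₁ h₂]

lemma coveringCenters_circumradius_nonempty [CompleteSpace X] (c : CatZero X)
    (hne : Y.Nonempty) (hbd : Bornology.IsBounded Y) :
    (coveringCenters Y (circumradius Y)).Nonempty := by
  set r := circumradius Y
  set C : ℕ → Set X := fun n => coveringCenters Y (r + 1 / (n + 1))
  have hC_anti : Antitone C := fun m n hmn => coveringCenters_mono Y (by gcongr)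
  have hC_ne : ∀ N, (⋂ n ≤ N, C n).Nonempty := fun N => by
    obtain ⟨x, hx⟩ := coveringCenters_nonempty_of_circumradius_lt hne hbd
      (lt_add_of_pos_right r (Nat.one_div_pos_of_nat : 0 < 1 / ((N : ℝ) + 1)))
    exact ⟨x, Set.mem_iInter₂.2 fun n hn => hC_anti hn hx⟩
  have hdiam : Tendsto (fun n => diam (C n)) atTop (𝓝 0) := by
    have hbound : Tendsto (fun n : ℕ => √(4 * (r + 1 / (n + 1)) ^ 2 - 4 * r ^ 2)) atTop
        (𝓝 0) := by
      convert (((tendsto_one_div_add_atTop_nhds_zero_nat.const_add r).pow 2).const_mul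
        4 |>.sub_const (4 * r ^ 2)).sqrt using 2
      simp
    exact squeeze_zero (fun _ => diam_nonneg) (fun _ => c.diam_coveringCenters_le hne _) hbound
  obtain ⟨z, hz⟩ := nonempty_iInter_of_nonempty_biInter
    (fun _ => isClosed_coveringCenters Y _) (fun _ => c.isBounded_coveringCenters hne _) hC_ne hdiam
  exact ⟨z, mem_coveringCenters_of_forall_one_div_add (Set.mem_iInter.1 hz)⟩

end CatZero

end

/-- In a complete CAT(0) space, every non-empty bounded subset has a unique
circumcenter: a unique point `z` with `Y ⊆ closedBall z (circumradius Y)`. -/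
theorem stmt1 {X : Type*} [MetricSpace X] [CompleteSpace X] (c : CatZero X)
    (Y : Set X) (hne : Y.Nonempty) (hbd : Bornology.IsBounded Y) :
    ∃! z : X, Y ⊆ Metric.closedBall z (circumradius Y) := by
  obtain ⟨z, hz⟩ := c.coveringCenters_circumradius_nonempty hne hbd
  exact ⟨z, hz, fun _ hz' => c.coveringCenters_circumradius_subsingleton hne hz' hz⟩
end

section
/- If x_i ∈ E and y_i ∈ F are the extremal vectors defining hyperbolic principal angles between E, F ∈ X_p, then they form biorthogonal bases: B_p(x_i, y_j) = 0 for i ≠ j, and moreover P_F(x_i) = c_i y_i and P_E(y_i) = c_i x_i. -/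
/-!
Since `Φ = 2 P_{E₀} - 1` is symmetric, so is `B(u, v) = ⟪u, Φ v⟫`, and the roles of `(E, x)` and
`(F, y)` may be exchanged. For `i < j` the `B`-unit vectors `(y i + t • y j) / √(1 + t²)` compete
with `y i` at step `i`, giving `c i + t B(x i, y j) ≤ c i √(1 + t²)` for every `t`; to first order
in `t` this forces `B(x i, y j) = 0`, and `j < i` follows by exchanging roles. The `B`-orthonormal
`y j` span `F` by dimension count, so `x i - c i • y i` is `B`-orthogonal to `F`, i.e.
`P_F (x i) = c i • y i`.
-/

open scoped RealInnerProductSpace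

/-- Extremal biorthogonal system defining the hyperbolic principal angles
between two subspaces `E, F` relative to the form `B(x, y) = ⟪x, Φ y⟫`:
`x i ∈ E` and `y i ∈ F` are `B`-unit vectors, `B`-orthogonal to the previous
ones, chosen to maximize `B (x, y)`; `c i = B (x i, y i)`. -/
def ExtremalSystem {H : Type*} [NormedAddCommGroup H] [InnerProductSpace ℝ H]
    (Φ : H →L[ℝ] H) (p : ℕ) (E F : Submodule ℝ H) (x y : Fin p → H) : Prop :=
  (∀ i, x i ∈ E) ∧ (∀ i, y i ∈ F) ∧
  (∀ i, ⟪x i, Φ (x i)⟫ = 1) ∧ (∀ i, ⟪y i, Φ (y i)⟫ = 1) ∧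
  (∀ i j, i ≠ j → ⟪x i, Φ (x j)⟫ = 0) ∧ (∀ i j, i ≠ j → ⟪y i, Φ (y j)⟫ = 0) ∧
  (∀ i : Fin p, ∀ u ∈ E, ∀ v ∈ F, ⟪u, Φ u⟫ = 1 → ⟪v, Φ v⟫ = 1 →
    (∀ j, j < i → ⟪u, Φ (x j)⟫ = 0) → (∀ j, j < i → ⟪v, Φ (y j)⟫ = 0) →
    ⟪u, Φ v⟫ ≤ ⟪x i, Φ (y i)⟫)

theorem eq_zero_of_forall_mul_le_mul_sq {a C : ℝ} (h : ∀ t, t * a ≤ C * t ^ 2) : a = 0 := by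
  set K := |C| + 1
  have hK : 0 < K := by positivity
  have ht := h (a / K)
  have key : a ^ 2 * (K - C) ≤ 0 := by
    have : a ^ 2 * K ≤ C * a ^ 2 := by
      rw [div_pow, ← mul_div_assoc, div_mul_eq_mul_div, div_le_div_iff₀ hK (by positivity)] at ht
      nlinarith
    linarith
  have : 0 < K - C := by linarith [le_abs_self C]
  exact pow_eq_zero_iff two_ne_zero |>.1 (le_antisymm (by nlinarith) (sq_nonneg a))

theorem eq_zero_of_forall_add_mul_le_mul_sqrt {a c : ℝ} (hc : 0 ≤ c)
    (h : ∀ t, c + t * a ≤ c * √(1 + t ^ 2)) : a = 0 := by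
  refine eq_zero_of_forall_mul_le_mul_sq (C := c / 2) fun t => ?_
  have hsqrt : √(1 + t ^ 2) ≤ 1 + t ^ 2 / 2 :=
    Real.sqrt_le_iff.2 ⟨by positivity, by nlinarith [sq_nonneg (t ^ 2)]⟩
  nlinarith [h t, mul_le_mul_of_nonneg_left hsqrt hc]

section
variable {H : Type*} [NormedAddCommGroup H] [InnerProductSpace ℝ H]

theorem LinearMap.IsSymmetric.of_eq_id_on_of_eq_neg_on_orthogonal {Φ : H →ₗ[ℝ] H}
    (K : Submodule ℝ H) [K.HasOrthogonalProjection]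
    (h₁ : ∀ v ∈ K, Φ v = v) (h₂ : ∀ v ∈ Kᗮ, Φ v = -v) : Φ.IsSymmetric := by
  have hΦ : Φ = (2 : ℝ) • (K.starProjection : H →ₗ[ℝ] H) - .id := by
    ext v
    have hv : Φ v = Φ (K.starProjection v) + Φ (v - K.starProjection v) := by
      rw [← map_add, add_sub_cancel]
    rw [hv, h₁ _ (K.starProjection_apply_mem v), h₂ _ (K.sub_starProjection_mem_orthogonal v)]
    simp only [LinearMap.sub_apply, LinearMap.smul_apply, ContinuousLinearMap.coe_coe,
      LinearMap.id_apply]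
    module
  rw [hΦ]
  exact (K.starProjection_isSymmetric.smul (by simp)).sub .id

theorem linearIndependent_of_inner_map_orthonormal {ι : Type*} {Φ : H →ₗ[ℝ] H} {v : ι → H}
    (h₁ : ∀ i, ⟪v i, Φ (v i)⟫ = 1) (h₀ : ∀ i j, i ≠ j → ⟪v i, Φ (v j)⟫ = 0) :
    LinearIndependent ℝ v :=
  LinearMap.BilinForm.linearIndependent_of_iIsOrtho (B := (innerₗ H).compl₂ Φ)
    (fun i j hij => by simpa using h₀ i j hij) (fun i => by simp [h₁])

theorem apply_eq_of_inner_map_sub_eq_zero {Φ P : H →ₗ[ℝ] H} {F : Submodule ℝ H}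
    (hP₁ : ∀ v ∈ F, P v = v) (hP₂ : ∀ v, (∀ w ∈ F, ⟪v, Φ w⟫ = 0) → P v = 0) {z f : H}
    (hf : f ∈ F) (hzf : ∀ w ∈ F, ⟪z - f, Φ w⟫ = 0) : P z = f := by
  have := hP₂ _ hzf
  rwa [map_sub, hP₁ f hf, sub_eq_zero] at this

theorem inner_map_eq_zero_of_mem_span {Φ : H →ₗ[ℝ] H} {ι : Type*} {v : ι → H} {z w : H}
    (hw : w ∈ Submodule.span ℝ (Set.range v)) (hz : ∀ i, ⟪z, Φ (v i)⟫ = 0) :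
    ⟪z, Φ w⟫ = 0 := by
  have : Submodule.span ℝ (Set.range v) ≤ LinearMap.ker ((innerₗ H z).comp Φ) :=
    Submodule.span_le.2 (Set.range_subset_iff.2 hz)
  simpa using this hw

end

namespace ExtremalSystem

variable {H : Type*} [NormedAddCommGroup H] [InnerProductSpace ℝ H] {Φ : H →L[ℝ] H} {p : ℕ}
  {E F : Submodule ℝ H} {x y : Fin p → H}

theorem symm (hΦ : (Φ : H →ₗ[ℝ] H).IsSymmetric) (h : ExtremalSystem Φ p E F x y) :
    ExtremalSystem Φ p F E y x := by
  obtain ⟨hxE, hyF, hxx, hyy, hx0, hy0, hmax⟩ := h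
  refine ⟨hyF, hxE, hyy, hxx, hy0, hx0, fun i v hv u hu hvv huu hvy hux => ?_⟩
  have hB : ∀ a b, ⟪a, Φ b⟫ = ⟪b, Φ a⟫ := fun a b => by rw [real_inner_comm, hΦ.apply_clm]
  rw [hB v, hB (y i)]
  exact hmax i u hu v hv huu hvv hux hvy

theorem inner_nonneg (h : ExtremalSystem Φ p E F x y) (i : Fin p) : 0 ≤ ⟪x i, Φ (y i)⟫ := by
  obtain ⟨hxE, hyF, hxx, hyy, hx0, hy0, hmax⟩ := h
  have := hmax i (x i) (hxE i) (-y i) (F.neg_mem (hyF i)) (hxx i) (by simp [hyy])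
    (fun j hj => hx0 i j hj.ne') (fun j hj => by simp [hy0 i j hj.ne'])
  simp only [map_neg, inner_neg_right] at this
  linarith

theorem inner_eq_zero_of_lt (h : ExtremalSystem Φ p E F x y) {i j : Fin p} (hij : i < j) :
    ⟪x i, Φ (y j)⟫ = 0 := by
  have hc := h.inner_nonneg i
  obtain ⟨hxE, hyF, hxx, hyy, hx0, hy0, hmax⟩ := h
  refine eq_zero_of_forall_add_mul_le_mul_sqrt hc fun t => ?_
  have hs : 0 < √(1 + t ^ 2) := by positivity
  have hnorm : ⟪y i + t • y j, Φ (y i + t • y j)⟫ = √(1 + t ^ 2) ^ 2 := by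
    rw [Real.sq_sqrt (by positivity)]
    simp [inner_add_left, inner_add_right, inner_smul_left, inner_smul_right, hyy,
      hy0 i j hij.ne, hy0 j i hij.ne']
    ring
  have := hmax i (x i) (hxE i) ((√(1 + t ^ 2))⁻¹ • (y i + t • y j))
    (F.smul_mem _ (F.add_mem (hyF i) (F.smul_mem _ (hyF j)))) (hxx i)
    (by rw [map_smul, real_inner_smul_left, real_inner_smul_right, hnorm]; field_simp)
    (fun k hk => hx0 i k hk.ne')
    (fun k hk => by
      simp [inner_add_left, inner_smul_left, hy0 i k hk.ne', hy0 j k (hk.trans hij).ne'])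
  rw [map_smul, real_inner_smul_right, inv_mul_le_iff₀ hs] at this
  simpa [inner_add_right, inner_smul_right, mul_comm] using this

theorem inner_eq_zero_of_ne (hΦ : (Φ : H →ₗ[ℝ] H).IsSymmetric) (h : ExtremalSystem Φ p E F x y)
    {i j : Fin p} (hij : i ≠ j) : ⟪x i, Φ (y j)⟫ = 0 := by
  obtain hij | hji := hij.lt_or_gt
  · exact h.inner_eq_zero_of_lt hij
  · rw [real_inner_comm, hΦ.apply_clm]
    exact (h.symm hΦ).inner_eq_zero_of_lt hji

theorem span_right [FiniteDimensional ℝ F] (h : ExtremalSystem Φ p E F x y)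
    (hF : Module.finrank ℝ F = p) : Submodule.span ℝ (Set.range y) = F := by
  obtain ⟨-, hyF, -, hyy, -, hy0, -⟩ := h
  refine Submodule.eq_of_le_of_finrank_le (Submodule.span_le.2 (Set.range_subset_iff.2 hyF)) ?_
  rw [finrank_span_eq_card (linearIndependent_of_inner_map_orthonormal (Φ := Φ) hyy hy0),
    Fintype.card_fin, hF]

theorem apply_left_eq (hΦ : (Φ : H →ₗ[ℝ] H).IsSymmetric) (h : ExtremalSystem Φ p E F x y)
    (hF : Module.finrank ℝ F = p) {P : H →ₗ[ℝ] H} (hP₁ : ∀ v ∈ F, P v = v)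
    (hP₂ : ∀ v, (∀ w ∈ F, ⟪v, Φ w⟫ = 0) → P v = 0) (i : Fin p) :
    P (x i) = ⟪x i, Φ (y i)⟫ • y i := by
  have : FiniteDimensional ℝ F := .of_finrank_pos (hF ▸ i.pos)
  obtain ⟨-, hyF, -, hyy, -, hy0, -⟩ := id h
  refine apply_eq_of_inner_map_sub_eq_zero hP₁ hP₂ (F.smul_mem _ (hyF i)) fun w hw => ?_
  refine inner_map_eq_zero_of_mem_span (h.span_right hF ▸ hw) fun j => ?_
  obtain rfl | hji := eq_or_ne j i
  · simp [inner_sub_left, inner_smul_left, hyy j]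
  · simp [inner_sub_left, inner_smul_left, h.inner_eq_zero_of_ne hΦ hji.symm, hy0 i j hji.symm]

end ExtremalSystem

theorem stmt5_general {H : Type*} [NormedAddCommGroup H] [InnerProductSpace ℝ H]
    (p : ℕ) (E₀ : Submodule ℝ H) (hE₀ : Module.finrank ℝ E₀ = p)
    (Φ : H →L[ℝ] H)
    (hΦ₁ : ∀ v ∈ E₀, Φ v = v) (hΦ₂ : ∀ v ∈ E₀ᗮ, Φ v = -v)
    (E F : Submodule ℝ H)
    (hEr : Module.finrank ℝ E = p) (hFr : Module.finrank ℝ F = p)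
    (PE PF : H →ₗ[ℝ] H)
    (hPE₁ : ∀ v ∈ E, PE v = v)
    (hPE₂ : ∀ v : H, (∀ w ∈ E, ⟪v, Φ w⟫ = 0) → PE v = 0)
    (hPF₁ : ∀ v ∈ F, PF v = v)
    (hPF₂ : ∀ v : H, (∀ w ∈ F, ⟪v, Φ w⟫ = 0) → PF v = 0)
    (x y : Fin p → H) (hsys : ExtremalSystem Φ p E F x y)
    (c : Fin p → ℝ) (hc : ∀ i, c i = ⟪x i, Φ (y i)⟫) :
    (∀ i j, i ≠ j → ⟪x i, Φ (y j)⟫ = 0) ∧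
    (∀ i, PF (x i) = c i • y i) ∧
    (∀ i, PE (y i) = c i • x i) := by
  obtain rfl | hp := p.eq_zero_or_pos
  · exact ⟨finZeroElim, finZeroElim, finZeroElim⟩
  have : FiniteDimensional ℝ E₀ := .of_finrank_pos (hE₀ ▸ hp)
  have hΦ := LinearMap.IsSymmetric.of_eq_id_on_of_eq_neg_on_orthogonal E₀ hΦ₁ hΦ₂
  refine ⟨fun i j => hsys.inner_eq_zero_of_ne hΦ, fun i => ?_, fun i => ?_⟩
  · rw [hc, hsys.apply_left_eq hΦ hFr hPF₁ hPF₂]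
  · rw [hc, (hsys.symm hΦ).apply_left_eq hΦ hEr hPE₁ hPE₂, real_inner_comm, hΦ.apply_clm]

/-- The extremal vectors `x i ∈ E`, `y i ∈ F` defining the hyperbolic principal
angles form biorthogonal bases: `B (x i, y j) = 0` for `i ≠ j`, and moreover
`P_F (x i) = c i • y i` and `P_E (y i) = c i • x i`. -/
theorem stmt5 {H : Type*} [NormedAddCommGroup H] [InnerProductSpace ℝ H]
    [CompleteSpace H] [TopologicalSpace.SeparableSpace H]
    (p : ℕ) (E₀ : Submodule ℝ H) (hE₀ : Module.finrank ℝ E₀ = p)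
    (Φ : H →L[ℝ] H)
    (hΦ₁ : ∀ v ∈ E₀, Φ v = v) (hΦ₂ : ∀ v ∈ E₀ᗮ, Φ v = -v)
    (E F : Submodule ℝ H)
    (hEr : Module.finrank ℝ E = p) (hFr : Module.finrank ℝ F = p)
    (hEpos : ∀ v ∈ E, v ≠ 0 → 0 < ⟪v, Φ v⟫)
    (hFpos : ∀ v ∈ F, v ≠ 0 → 0 < ⟪v, Φ v⟫)
    (PE PF : H →ₗ[ℝ] H)
    (hPE₁ : ∀ v ∈ E, PE v = v)
    (hPE₂ : ∀ v : H, (∀ w ∈ E, ⟪v, Φ w⟫ = 0) → PE v = 0)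
    (hPF₁ : ∀ v ∈ F, PF v = v)
    (hPF₂ : ∀ v : H, (∀ w ∈ F, ⟪v, Φ w⟫ = 0) → PF v = 0)
    (x y : Fin p → H) (hsys : ExtremalSystem Φ p E F x y)
    (c : Fin p → ℝ) (hc : ∀ i, c i = ⟪x i, Φ (y i)⟫) :
    (∀ i j, i ≠ j → ⟪x i, Φ (y j)⟫ = 0) ∧
    (∀ i, PF (x i) = c i • y i) ∧
    (∀ i, PE (y i) = c i • x i) :=
  stmt5_general p E₀ hE₀ Φ hΦ₁ hΦ₂ E F hEr hFr PE PF hPE₁ hPE₂ hPF₁ hPF₂ x y hsys c hc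
end

section
/- The kernel of the action homomorphism π: O(p,∞) → Isom(X_p(ℝ)) is {±Id}. -/
open scoped RealInnerProductSpace

/-!
If `g` fixes every positive `p`-plane, it fixes `E₀`, hence, preserving `B_p`, also `E₀ᗮ`.
For `x₀ ∈ E₀` and `f ∈ E₀ᗮ` small enough, the graph over `E₀` of the rank-one map
`y ↦ ⟪x₀, y⟫ • f` is again a positive `p`-plane, and `g` fixing it means that `g` commutes with
this map. Since `E₀` and `E₀ᗮ` are both nonzero, these relations force `g = c • id`, and
`B_p`-invariance gives `c² = 1`.
-/

section

variable {H : Type*} [NormedAddCommGroup H] [InnerProductSpace ℝ H] {E₀ : Submodule ℝ H}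

theorem eq_of_add_eq_add_of_mem_orthogonal {a a' b b' : H} (ha : a ∈ E₀) (ha' : a' ∈ E₀)
    (hb : b ∈ E₀ᗮ) (hb' : b' ∈ E₀ᗮ) (h : a + b = a' + b') : a = a' := by
  have hdiff : a - a' = b' - b := by rw [sub_eq_sub_iff_add_eq_add, h, add_comm]
  refine sub_eq_zero.mp (Submodule.disjoint_def.mp E₀.orthogonal_disjoint _
    (E₀.sub_mem ha ha') ?_)
  rw [hdiff]
  exact E₀ᗮ.sub_mem hb' hb

theorem inner_apply_eq_of_mem [E₀.HasOrthogonalProjection] {Φ : H →ₗ[ℝ] H}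
    (hΦ₁ : ∀ v ∈ E₀, Φ v = v) (hΦ₂ : ∀ v ∈ E₀ᗮ, Φ v = -v) {w : H} (hw : w ∈ E₀) (v : H) :
    ⟪w, Φ v⟫ = ⟪w, v⟫ := by
  obtain ⟨a, ha, b, hb, rfl⟩ := E₀.exists_add_mem_mem_orthogonal v
  rw [map_add, hΦ₁ a ha, hΦ₂ b hb, inner_add_right, inner_add_right, inner_neg_right,
    Submodule.inner_right_of_mem_orthogonal hw hb, neg_zero]

theorem orthogonal_ne_bot_of_not_finiteDimensional [FiniteDimensional ℝ E₀]
    (hinf : ¬ FiniteDimensional ℝ H) : E₀ᗮ ≠ ⊥ := by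
  rw [Ne, Submodule.orthogonal_eq_bot_iff]
  rintro rfl
  exact hinf (Module.Finite.equiv Submodule.topEquiv)

theorem mem_orthogonal_apply_of_map_eq [E₀.HasOrthogonalProjection] {Φ g : H →ₗ[ℝ] H}
    (hΦ₁ : ∀ v ∈ E₀, Φ v = v) (hΦ₂ : ∀ v ∈ E₀ᗮ, Φ v = -v)
    (hO : ∀ u v : H, ⟪g u, Φ (g v)⟫ = ⟪u, Φ v⟫) (hg : E₀.map g = E₀) {f : H} (hf : f ∈ E₀ᗮ) :
    g f ∈ E₀ᗮ := by
  intro u hu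
  rw [← hg] at hu
  obtain ⟨u, hu, rfl⟩ := hu
  rw [← inner_apply_eq_of_mem hΦ₁ hΦ₂ (hg ▸ Submodule.mem_map_of_mem hu), hO,
    inner_apply_eq_of_mem hΦ₁ hΦ₂ hu]
  exact Submodule.inner_right_of_mem_orthogonal hu hf

theorem finrank_map_id_add {T : H →ₗ[ℝ] H} (hT : ∀ y ∈ E₀, T y ∈ E₀ᗮ) :
    Module.finrank ℝ (E₀.map (LinearMap.id + T)) = Module.finrank ℝ E₀ := by
  rw [← Submodule.range_subtype E₀, ← LinearMap.range_comp, Submodule.range_subtype]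
  exact LinearMap.finrank_range_of_inj fun y z hyz => Subtype.ext <|
    eq_of_add_eq_add_of_mem_orthogonal y.2 z.2 (hT y y.2) (hT z z.2) hyz

theorem inner_apply_pos_of_mem_map_id_add {Φ T : H →ₗ[ℝ] H}
    (hΦ₁ : ∀ v ∈ E₀, Φ v = v) (hΦ₂ : ∀ v ∈ E₀ᗮ, Φ v = -v) (hT : ∀ y ∈ E₀, T y ∈ E₀ᗮ)
    (hT_lt : ∀ y ∈ E₀, y ≠ 0 → ‖T y‖ < ‖y‖) {v : H} (hv : v ∈ E₀.map (LinearMap.id + T))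
    (hv0 : v ≠ 0) : 0 < ⟪v, Φ v⟫ := by
  obtain ⟨y, hy, rfl⟩ := hv
  have hy0 : y ≠ 0 := by rintro rfl; simp at hv0
  have hyT : ⟪y, T y⟫ = 0 := Submodule.inner_right_of_mem_orthogonal hy (hT y hy)
  have hval : ⟪y + T y, Φ (y + T y)⟫ = ‖y‖ ^ 2 - ‖T y‖ ^ 2 := by
    rw [map_add, hΦ₁ y hy, hΦ₂ _ (hT y hy), inner_add_left, inner_add_right, inner_add_right,
      inner_neg_right, inner_neg_right, hyT, real_inner_comm y (T y), hyT,
      real_inner_self_eq_norm_sq, real_inner_self_eq_norm_sq]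
    ring
  simp only [LinearMap.add_apply, LinearMap.id_apply]
  rw [hval, sub_pos]
  exact pow_lt_pow_left₀ (hT_lt y hy hy0) (norm_nonneg _) two_ne_zero

theorem apply_apply_comm_of_map_eq {g T : H →ₗ[ℝ] H} (hT : ∀ y ∈ E₀, T y ∈ E₀ᗮ)
    (hg₀ : ∀ y ∈ E₀, g y ∈ E₀) (hg₁ : ∀ f ∈ E₀ᗮ, g f ∈ E₀ᗮ)
    (hgT : (E₀.map (LinearMap.id + T)).map g = E₀.map (LinearMap.id + T)) {y : H} (hy : y ∈ E₀) :
    g (T y) = T (g y) := by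
  have hmem : g (y + T y) ∈ (E₀.map (LinearMap.id + T)).map g :=
    Submodule.mem_map_of_mem (Submodule.mem_map_of_mem (f := LinearMap.id + T) hy)
  rw [hgT] at hmem
  obtain ⟨z, hz, hzeq⟩ := hmem
  simp only [LinearMap.add_apply, LinearMap.id_apply, map_add] at hzeq
  have hgz : g y = z := eq_of_add_eq_add_of_mem_orthogonal (hg₀ y hy) hz (hg₁ _ (hT y hy))
    (hT z hz) hzeq.symm
  rw [hgz]
  exact add_left_cancel (hzeq.symm.trans (by rw [hgz]))

theorem inner_smul_apply_eq_of_forall_map_eq {Φ g : H →ₗ[ℝ] H}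
    (hΦ₁ : ∀ v ∈ E₀, Φ v = v) (hΦ₂ : ∀ v ∈ E₀ᗮ, Φ v = -v)
    (hg₀ : ∀ y ∈ E₀, g y ∈ E₀) (hg₁ : ∀ f ∈ E₀ᗮ, g f ∈ E₀ᗮ)
    (hfix : ∀ E : Submodule ℝ H, Module.finrank ℝ E = Module.finrank ℝ E₀ →
      (∀ v ∈ E, v ≠ 0 → 0 < ⟪v, Φ v⟫) → E.map g = E)
    (x₀ : H) {y f : H} (hy : y ∈ E₀) (hf : f ∈ E₀ᗮ) :
    ⟪x₀, y⟫ • g f = ⟪x₀, g y⟫ • f := by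
  set t := (‖x₀‖ * ‖f‖ + 1)⁻¹
  have ht : 0 < t := by positivity
  have htlt : t * (‖x₀‖ * ‖f‖) < 1 := by
    rw [inv_mul_lt_iff₀ (by positivity)]
    linarith
  set T := (innerₛₗ ℝ x₀).smulRight (t • f)
  have hT : ∀ y ∈ E₀, T y ∈ E₀ᗮ := fun y _ => E₀ᗮ.smul_mem _ (E₀ᗮ.smul_mem _ hf)
  have hT_lt : ∀ y ∈ E₀, y ≠ 0 → ‖T y‖ < ‖y‖ := by
    intro y _ hy0
    calc ‖T y‖ = |⟪x₀, y⟫| * (t * ‖f‖) := by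
          simp [T, norm_smul, abs_of_pos ht]
      _ ≤ ‖x₀‖ * ‖y‖ * (t * ‖f‖) := by gcongr; exact abs_real_inner_le_norm x₀ y
      _ = t * (‖x₀‖ * ‖f‖) * ‖y‖ := by ring
      _ < ‖y‖ := mul_lt_of_lt_one_left (norm_pos_iff.2 hy0) htlt
  have hcomm := apply_apply_comm_of_map_eq hT hg₀ hg₁
    (hfix _ (finrank_map_id_add hT) fun _ hv hv0 =>
      inner_apply_pos_of_mem_map_id_add hΦ₁ hΦ₂ hT hT_lt hv hv0) hy
  simp only [T, LinearMap.smulRight_apply, innerₛₗ_apply_apply, map_smul] at hcomm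
  rw [smul_comm _ t, smul_comm _ t] at hcomm
  exact smul_right_injective H ht.ne' hcomm

theorem exists_forall_eq_smul_of_inner_smul_apply_eq [E₀.HasOrthogonalProjection]
    {g : H →ₗ[ℝ] H} (hE₀ : E₀ ≠ ⊥) (hE₀' : E₀ᗮ ≠ ⊥) (hg₀ : ∀ y ∈ E₀, g y ∈ E₀)
    (hkey : ∀ x ∈ E₀, ∀ y ∈ E₀, ∀ f ∈ E₀ᗮ, ⟪x, y⟫ • g f = ⟪x, g y⟫ • f) :
    ∃ c : ℝ, ∀ v, g v = c • v := by
  obtain ⟨x₁, hx₁, hx₁0⟩ := Submodule.exists_mem_ne_zero_of_ne_bot hE₀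
  obtain ⟨f₀, hf₀, hf₀0⟩ := Submodule.exists_mem_ne_zero_of_ne_bot hE₀'
  set c := ⟪x₁, x₁⟫⁻¹ * ⟪x₁, g x₁⟫
  have hgf : ∀ f ∈ E₀ᗮ, g f = c • f := by
    intro f hf
    rw [mul_smul, ← hkey x₁ hx₁ x₁ hx₁ f hf, inv_smul_smul₀ (inner_self_ne_zero.2 hx₁0)]
  have hgy : ∀ y ∈ E₀, g y = c • y := by
    intro y hy
    have horth : ∀ x ∈ E₀, ⟪x, g y - c • y⟫ = 0 := by
      intro x hx
      have h := hkey x hx y hy f₀ hf₀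
      rw [hgf f₀ hf₀, smul_smul] at h
      rw [inner_sub_right, real_inner_smul_right, ← smul_left_injective ℝ hf₀0 h]
      ring
    exact sub_eq_zero.1 <| inner_self_eq_zero.1 <|
      horth _ (E₀.sub_mem (hg₀ y hy) (E₀.smul_mem c hy))
  refine ⟨c, fun v => ?_⟩
  obtain ⟨a, ha, b, hb, rfl⟩ := E₀.exists_add_mem_mem_orthogonal v
  rw [map_add, hgy a ha, hgf b hb, smul_add]

theorem eq_one_or_eq_neg_one_of_inner_smul_apply_smul {Φ : H →ₗ[ℝ] H} {x : H}
    (hx : ⟪x, Φ x⟫ ≠ 0) {c : ℝ} (h : ⟪c • x, Φ (c • x)⟫ = ⟪x, Φ x⟫) : c = 1 ∨ c = -1 := by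
  rw [map_smul, real_inner_smul_left, real_inner_smul_right, ← mul_assoc] at h
  exact mul_self_eq_one_iff.1 (mul_right_cancel₀ hx (h.trans (one_mul _).symm))

end

theorem Submodule.map_eq_self_of_forall_eq_or_forall_eq_neg {R M : Type*} [Ring R]
    [AddCommGroup M] [Module R M] {g : M →ₗ[R] M} (hg : (∀ v, g v = v) ∨ (∀ v, g v = -v))
    (E : Submodule R M) : E.map g = E := by
  rcases hg with h | h
  · rw [show g = LinearMap.id from LinearMap.ext h, Submodule.map_id]
  · rw [show g = -LinearMap.id from LinearMap.ext h, Submodule.map_neg, Submodule.map_id]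

theorem stmt11_general {H : Type*} [NormedAddCommGroup H] [InnerProductSpace ℝ H]
    (hinf : ¬ FiniteDimensional ℝ H)
    (p : ℕ) (hp : 0 < p) (E₀ : Submodule ℝ H) (hE₀ : Module.finrank ℝ E₀ = p)
    (Φ : H →L[ℝ] H)
    (hΦ₁ : ∀ v ∈ E₀, Φ v = v) (hΦ₂ : ∀ v ∈ E₀ᗮ, Φ v = -v)
    (g : H ≃L[ℝ] H)
    (hO : ∀ u v : H, ⟪g u, Φ (g v)⟫ = ⟪u, Φ v⟫) :
    (∀ E : Submodule ℝ H, Module.finrank ℝ E = p →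
      (∀ v ∈ E, v ≠ 0 → 0 < ⟪v, Φ v⟫) → E.map (g : H →ₗ[ℝ] H) = E) ↔
    ((∀ v : H, g v = v) ∨ (∀ v : H, g v = -v)) := by
  constructor
  · intro hfix
    have : FiniteDimensional ℝ E₀ := Module.finite_of_finrank_pos (hE₀ ▸ hp)
    have hE₀_ne : E₀ ≠ ⊥ := fun h => by rw [h, finrank_bot] at hE₀; omega
    have hE₀_pos : ∀ v ∈ E₀, v ≠ 0 → 0 < ⟪v, Φ v⟫ := fun v hv hv0 => by
      rw [hΦ₁ v hv]; exact real_inner_self_pos.2 hv0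
    have hg : E₀.map (g : H →ₗ[ℝ] H) = E₀ := hfix E₀ hE₀ hE₀_pos
    have hg₀ : ∀ y ∈ E₀, g y ∈ E₀ := fun y hy => hg ▸ Submodule.mem_map_of_mem hy
    have hg₁ : ∀ f ∈ E₀ᗮ, g f ∈ E₀ᗮ := fun f hf =>
      mem_orthogonal_apply_of_map_eq (Φ := Φ) hΦ₁ hΦ₂ hO hg hf
    obtain ⟨c, hc⟩ := exists_forall_eq_smul_of_inner_smul_apply_eq hE₀_ne
      (orthogonal_ne_bot_of_not_finiteDimensional hinf) hg₀
      fun x _ y hy f hf => inner_smul_apply_eq_of_forall_map_eq (Φ := Φ) hΦ₁ hΦ₂ hg₀ hg₁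
        (fun E hE => hfix E (hE.trans hE₀)) x hy hf
    obtain ⟨x₁, hx₁, hx₁0⟩ := Submodule.exists_mem_ne_zero_of_ne_bot hE₀_ne
    rcases eq_one_or_eq_neg_one_of_inner_smul_apply_smul (Φ := Φ) (hE₀_pos x₁ hx₁ hx₁0).ne'
      (c := c) (by rw [← hc]; exact hO x₁ x₁) with rfl | rfl
    · exact Or.inl fun v => by simpa using hc v
    · exact Or.inr fun v => by simpa using hc v
  · exact fun hg E _ _ => Submodule.map_eq_self_of_forall_eq_or_forall_eq_neg hg E

/-- The kernel of the action homomorphism `O(p,∞) → Isom(X_p(ℝ))` is `{±Id}`: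
`g ∈ O(p,∞)` fixes every `p`-dimensional subspace on which `B_p` is positive
definite if and only if `g = Id` or `g = -Id`. -/
theorem stmt11 {H : Type*} [NormedAddCommGroup H] [InnerProductSpace ℝ H]
    [CompleteSpace H] [TopologicalSpace.SeparableSpace H]
    (hinf : ¬ FiniteDimensional ℝ H)
    (p : ℕ) (hp : 0 < p) (E₀ : Submodule ℝ H) (hE₀ : Module.finrank ℝ E₀ = p)
    (Φ : H →L[ℝ] H)
    (hΦ₁ : ∀ v ∈ E₀, Φ v = v) (hΦ₂ : ∀ v ∈ E₀ᗮ, Φ v = -v)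
    (g : H ≃L[ℝ] H)
    (hO : ∀ u v : H, ⟪g u, Φ (g v)⟫ = ⟪u, Φ v⟫) :
    (∀ E : Submodule ℝ H, Module.finrank ℝ E = p →
      (∀ v ∈ E, v ≠ 0 → 0 < ⟪v, Φ v⟫) → E.map (g : H →ₗ[ℝ] H) = E) ↔
    ((∀ v : H, g v = v) ∨ (∀ v : H, g v = -v)) :=
  stmt11_general hinf p hp E₀ hE₀ Φ hΦ₁ hΦ₂ g hO
end

section
/- For a maximal totally isotropic flag setup in O(p,∞): if h is a bounded operator with h*Φh = Φ written in block form with respect to a Witt basis (in which Φ has block form [[0, I_p, 0],[I_p, 0, 0],[0,0,−I]]) and g_t = diag(e^{tλ}, e^{−tλ}, I) with λ_1 ≥ … ≥ λ_p ≥ 0, then {‖g_t^{-1} h g_t‖ : t ≥ 0} is bounded if and only if: h_1 is block upper-triangular with respect to the level sets of λ, h_4 vanishes except on entries (i,j) with λ_i = λ_j = 0, and h_7 vanishes on columns j with λ_j > 0 (and the analogous conditions obtained from h^{-1}). -/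
/-!
Conjugating by `g t` multiplies the matrix entry `⟪e i, h (e j)⟫` by `exp (t (Λ j - Λ i))`,
so a bound for `t ≥ 0` forces the entries with `Λ i < Λ j` to vanish. Conversely, `Λ` takes
finitely many values; cutting `h` into blocks `P_v h P_w` along the closed weight spaces, the
conjugate is `∑ exp (t (w - v)) • P_v h P_w`, where the blocks with `v < w` vanish and the
other coefficients are at most `1`.

The condition on `h⁻¹` comes for free: `Φ` permutes the basis up to sign, pairing `e' i` with
`e' (p + i)` and so negating weights, and since `h` preserves `⟪·, Φ ·⟫` the entries of `h⁻¹`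
are, up to sign, entries of `h` at the negated weights.
-/

open scoped RealInnerProductSpace

open Submodule

section OrthonormalBasis

variable {H : Type*} [NormedAddCommGroup H] [InnerProductSpace ℝ H] {ι : Type*} {e : ι → H}

theorem ContinuousLinearMap.ext_of_apply_basis {F : Type*} [NormedAddCommGroup F]
    [NormedSpace ℝ F] (hdense : (span ℝ (Set.range e)).topologicalClosure = ⊤)
    {f f' : H →L[ℝ] F} (hff' : ∀ i, f (e i) = f' (e i)) : f = f' :=
  ContinuousLinearMap.ext_on (dense_iff_topologicalClosure_eq_top.mpr hdense)
    (by rintro _ ⟨i, rfl⟩; exact hff' i)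

theorem inner_basis_apply_of_apply_basis (he : Orthonormal ℝ e)
    (hdense : (span ℝ (Set.range e)).topologicalClosure = ⊤) {T : H →L[ℝ] H} {c : ι → ℝ}
    (hT : ∀ k, T (e k) = c k • e k) (i : ι) (y : H) : ⟪e i, T y⟫ = c i * ⟪e i, y⟫ := by
  have : (innerSL ℝ (e i)).comp T = c i • innerSL ℝ (e i) := by
    refine ContinuousLinearMap.ext_of_apply_basis hdense fun k => ?_
    by_cases hik : i = k
    · subst hik; simp [hT]
    · simp [hT, he.inner_eq_zero hik]
  simpa using DFunLike.congr_fun this y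

theorem abs_inner_basis_apply_basis_le_opNorm (he : Orthonormal ℝ e) (A : H →L[ℝ] H)
    (i j : ι) : |⟪e i, A (e j)⟫| ≤ ‖A‖ :=
  calc |⟪e i, A (e j)⟫| ≤ ‖e i‖ * ‖A (e j)‖ := abs_real_inner_le_norm _ _
    _ ≤ ‖e i‖ * (‖A‖ * ‖e j‖) := by gcongr; exact A.le_opNorm _
    _ = ‖A‖ := by rw [he.1 i, he.1 j, one_mul, mul_one]

theorem mem_orthogonal_span_image {s : Set ι} {y : H} (hy : ∀ i ∈ s, ⟪e i, y⟫ = 0) :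
    y ∈ (span ℝ (e '' s))ᗮ := by
  rw [mem_orthogonal]
  intro u hu
  induction hu using Submodule.span_induction with
  | mem x hx => obtain ⟨i, hi, rfl⟩ := hx; exact hy i hi
  | zero => simp
  | add x z _ _ hx hz => simp [inner_add_left, hx, hz]
  | smul a x _ hx => simp [real_inner_smul_left, hx]

theorem ContinuousLinearEquiv.symm_apply_basis_of_apply_basis {g : H ≃L[ℝ] H} {c : ι → ℝ}
    (hg : ∀ k, g (e k) = Real.exp (c k) • e k) (k : ι) :
    g.symm (e k) = Real.exp (-c k) • e k := by
  rw [g.symm_apply_eq, map_smul, hg, smul_smul, ← Real.exp_add, neg_add_cancel,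
    Real.exp_zero, one_smul]

end OrthonormalBasis

theorem eq_zero_of_forall_exp_mul_abs_le {δ c C : ℝ} (hδ : 0 < δ)
    (hC : ∀ t, 0 ≤ t → Real.exp (t * δ) * |c| ≤ C) : c = 0 := by
  by_contra hc
  have hgrow : Filter.Tendsto (fun t => Real.exp (t * δ) * |c|) Filter.atTop Filter.atTop :=
    (Real.tendsto_exp_atTop.comp (Filter.tendsto_id.atTop_mul_const hδ)).atTop_mul_const
      (abs_pos.mpr hc)
  obtain ⟨t, hbig, ht⟩ :=
    ((hgrow.eventually_gt_atTop C).and (Filter.eventually_ge_atTop 0)).exists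
  exact (hC t ht).not_gt hbig

section WeightProjection

variable {H : Type*} [NormedAddCommGroup H] [InnerProductSpace ℝ H] [CompleteSpace H]
  {ι : Type*} (e : ι → H) (Λ : ι → ℝ)

noncomputable def weightSpace (v : ℝ) : Submodule ℝ H :=
  (span ℝ (e '' {i | Λ i = v})).topologicalClosure

instance (v : ℝ) : (weightSpace e Λ v).HasOrthogonalProjection :=
  have : CompleteSpace (weightSpace e Λ v) :=
    (isClosed_topologicalClosure _).completeSpace_coe
  inferInstance

noncomputable def weightProj (v : ℝ) : H →L[ℝ] H := (weightSpace e Λ v).starProjection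

variable {e Λ}

theorem weightProj_apply_of_eq {v : ℝ} {j : ι} (hj : Λ j = v) :
    weightProj e Λ v (e j) = e j :=
  starProjection_eq_self_iff.mpr (le_topologicalClosure _ (subset_span ⟨j, hj, rfl⟩))

theorem weightProj_eq_zero_of_inner {v : ℝ} {y : H} (hy : ∀ i, Λ i = v → ⟪e i, y⟫ = 0) :
    weightProj e Λ v y = 0 := by
  refine (starProjection_apply_eq_zero_iff _).mpr ?_
  rw [weightSpace, orthogonal_closure]
  exact mem_orthogonal_span_image hy

theorem weightProj_apply_of_ne (he : Orthonormal ℝ e) {v : ℝ} {j : ι} (hj : Λ j ≠ v) :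
    weightProj e Λ v (e j) = 0 :=
  weightProj_eq_zero_of_inner fun i hi => he.inner_eq_zero (by rintro rfl; exact hj hi)

variable (he : Orthonormal ℝ e) (hdense : (span ℝ (Set.range e)).topologicalClosure = ⊤)
include he hdense

theorem eq_sum_smul_weightProj {V : Finset ℝ} (hV : ∀ j, Λ j ∈ V) {T : H →L[ℝ] H}
    {f : ℝ → ℝ} (hT : ∀ j, T (e j) = f (Λ j) • e j) :
    T = ∑ v ∈ V, f v • weightProj e Λ v := by
  refine ContinuousLinearMap.ext_of_apply_basis hdense fun j => ?_
  rw [sum_apply, Finset.sum_eq_single_of_mem (Λ j) (hV j)]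
  · simp [hT, weightProj_apply_of_eq]
  · intro v _ hv
    simp [weightProj_apply_of_ne he (Ne.symm hv)]

theorem weightProj_comp_comp_weightProj_eq_zero {h : H →L[ℝ] H}
    (hh : ∀ i j, Λ i < Λ j → ⟪e i, h (e j)⟫ = 0) {v w : ℝ} (hvw : v < w) :
    (weightProj e Λ v).comp (h.comp (weightProj e Λ w)) = 0 := by
  refine ContinuousLinearMap.ext_of_apply_basis hdense fun j => ?_
  by_cases hj : Λ j = w
  · simpa [weightProj_apply_of_eq hj] using
      weightProj_eq_zero_of_inner fun i hi => hh i j (by rw [hi, hj]; exact hvw)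
  · simp [weightProj_apply_of_ne he hj]

end WeightProjection

section WeightDecomposition

variable {H : Type*} [NormedAddCommGroup H] [InnerProductSpace ℝ H] {ι : Type*}
  {e : ι → H} {Λ : ι → ℝ}
  (he : Orthonormal ℝ e) (hdense : (span ℝ (Set.range e)).topologicalClosure = ⊤)
  {g : ℝ → H ≃L[ℝ] H} (hg : ∀ t k, g t (e k) = Real.exp (t * Λ k) • e k) (h : H →L[ℝ] H)
include he hdense hg

theorem inner_basis_conj_apply_basis (t : ℝ) (i j : ι) :
    ⟪e i, ((g t).symm : H →L[ℝ] H).comp (h.comp (g t : H →L[ℝ] H)) (e j)⟫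
      = Real.exp (t * (Λ j - Λ i)) * ⟪e i, h (e j)⟫ := by
  have hsymm : ∀ k, ((g t).symm : H →L[ℝ] H) (e k) = Real.exp (-(t * Λ k)) • e k :=
    (g t).symm_apply_basis_of_apply_basis (hg t)
  rw [ContinuousLinearMap.comp_apply, inner_basis_apply_of_apply_basis he hdense hsymm,
    ContinuousLinearMap.comp_apply, ContinuousLinearEquiv.coe_coe, hg, map_smul,
    real_inner_smul_right, ← mul_assoc, ← Real.exp_add]
  ring_nf

theorem inner_basis_apply_basis_eq_zero_of_bounded_conj
    (hbdd : ∃ C, ∀ t, 0 ≤ t → ‖((g t).symm : H →L[ℝ] H).comp (h.comp (g t : H →L[ℝ] H))‖ ≤ C)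
    {i j : ι} (hij : Λ i < Λ j) : ⟪e i, h (e j)⟫ = 0 := by
  obtain ⟨C, hC⟩ := hbdd
  refine eq_zero_of_forall_exp_mul_abs_le (C := C) (sub_pos.mpr hij) fun t ht => ?_
  have hentry := abs_inner_basis_apply_basis_le_opNorm he
    (((g t).symm : H →L[ℝ] H).comp (h.comp (g t : H →L[ℝ] H))) i j
  rw [inner_basis_conj_apply_basis he hdense hg, abs_mul, abs_of_pos (Real.exp_pos _)] at hentry
  exact hentry.trans (hC t ht)

theorem conj_eq_sum_weightProj [CompleteSpace H] {V : Finset ℝ} (hV : ∀ j, Λ j ∈ V) (t : ℝ) :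
    ((g t).symm : H →L[ℝ] H).comp (h.comp (g t : H →L[ℝ] H))
      = ∑ v ∈ V, ∑ w ∈ V, Real.exp (t * (w - v)) •
          (weightProj e Λ v).comp (h.comp (weightProj e Λ w)) := by
  rw [eq_sum_smul_weightProj he hdense hV (T := (g t : H →L[ℝ] H))
      (f := fun w => Real.exp (t * w)) (hg t),
    eq_sum_smul_weightProj he hdense hV (T := ((g t).symm : H →L[ℝ] H))
      (f := fun v => Real.exp (-(t * v))) ((g t).symm_apply_basis_of_apply_basis (hg t)),
    ContinuousLinearMap.finsetSum_comp]
  refine Finset.sum_congr rfl fun v _ => ?_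
  rw [ContinuousLinearMap.comp_finsetSum, ContinuousLinearMap.smul_comp,
    ContinuousLinearMap.comp_finsetSum, Finset.smul_sum]
  refine Finset.sum_congr rfl fun w _ => ?_
  rw [ContinuousLinearMap.comp_smul, ContinuousLinearMap.comp_smul, smul_smul, ← Real.exp_add]
  ring_nf

theorem exists_norm_conj_le_iff [CompleteSpace H] (hfin : (Set.range Λ).Finite) :
    (∃ C, ∀ t, 0 ≤ t → ‖((g t).symm : H →L[ℝ] H).comp (h.comp (g t : H →L[ℝ] H))‖ ≤ C) ↔
      ∀ i j, Λ i < Λ j → ⟪e i, h (e j)⟫ = 0 := by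
  refine ⟨fun hbdd i j => inner_basis_apply_basis_eq_zero_of_bounded_conj he hdense hg h hbdd,
    fun hh => ?_⟩
  have hV : ∀ j, Λ j ∈ hfin.toFinset := fun j => hfin.mem_toFinset.mpr ⟨j, rfl⟩
  set Q := fun v w => (weightProj e Λ v).comp (h.comp (weightProj e Λ w))
  refine ⟨∑ v ∈ hfin.toFinset, ∑ w ∈ hfin.toFinset, ‖Q v w‖, fun t ht => ?_⟩
  rw [conj_eq_sum_weightProj he hdense hg h hV t]
  refine (norm_sum_le _ _).trans (Finset.sum_le_sum fun v _ => ?_)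
  refine (norm_sum_le _ _).trans (Finset.sum_le_sum fun w _ => ?_)
  rcases lt_or_ge v w with hvw | hwv
  · simp [Q, weightProj_comp_comp_weightProj_eq_zero he hdense hh hvw]
  · rw [norm_smul, Real.norm_of_nonneg (Real.exp_pos _).le]
    exact mul_le_of_le_one_left (norm_nonneg _)
      (Real.exp_le_one_iff.mpr (mul_nonpos_of_nonneg_of_nonpos ht (sub_nonpos.mpr hwv)))

end WeightDecomposition

section SignedInvolution

variable {H : Type*} [NormedAddCommGroup H] [InnerProductSpace ℝ H] {ι : Type*} {e : ι → H}
  {σ : ι → ι} {ε : ι → ℝ} {Φ : H →L[ℝ] H}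
  (he : Orthonormal ℝ e) (hdense : (span ℝ (Set.range e)).topologicalClosure = ⊤)
  (hσ : Function.Involutive σ) (hεσ : ∀ i, ε (σ i) = ε i) (hε : ∀ i, ε i * ε i = 1)
  (hΦ : ∀ i, Φ (e i) = ε i • e (σ i))
include he hdense hσ hεσ hΦ

theorem inner_basis_apply_eq_inner_apply_basis (j : ι) (y : H) :
    ⟪e j, Φ y⟫ = ⟪Φ (e j), y⟫ := by
  have : (innerSL ℝ (e j)).comp Φ = innerSL ℝ (Φ (e j)) := by
    refine ContinuousLinearMap.ext_of_apply_basis hdense fun k => ?_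
    simp only [ContinuousLinearMap.comp_apply, innerSL_apply_apply, hΦ,
      real_inner_smul_left, real_inner_smul_right]
    by_cases hjk : j = σ k
    · rw [hjk, hσ k, hεσ, real_inner_self_eq_norm_sq, real_inner_self_eq_norm_sq, he.1, he.1]
    · rw [he.inner_eq_zero hjk, he.inner_eq_zero fun hsk => hjk (by rw [← hsk, hσ]),
        mul_zero, mul_zero]
  exact DFunLike.congr_fun this y

variable {h : H ≃L[ℝ] H} (hO : ∀ u v, ⟪h u, Φ (h v)⟫ = ⟪u, Φ v⟫)
include hε hO

theorem inner_basis_symm_apply_basis (i j : ι) :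
    ⟪e i, h.symm (e j)⟫ = ε i * ε j * ⟪e (σ j), h (e (σ i))⟫ := by
  have hΦΦ : Φ (Φ (e i)) = e i := by
    rw [hΦ, map_smul, hΦ, hσ, hεσ, smul_smul, hε, one_smul]
  calc ⟪e i, h.symm (e j)⟫ = ⟪h.symm (e j), Φ (Φ (e i))⟫ := by rw [hΦΦ, real_inner_comm]
    _ = ⟪e j, Φ (h (Φ (e i)))⟫ := by rw [← hO, h.apply_symm_apply]
    _ = ε i * ε j * ⟪e (σ j), h (e (σ i))⟫ := by
      rw [inner_basis_apply_eq_inner_apply_basis he hdense hσ hεσ hΦ, hΦ, hΦ, map_smul,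
        real_inner_smul_left, real_inner_smul_right]
      ring

theorem inner_basis_symm_apply_basis_eq_zero {Λ : ι → ℝ} (hΛσ : ∀ i, Λ (σ i) = -Λ i)
    (hh : ∀ i j, Λ i < Λ j → ⟪e i, h (e j)⟫ = 0) {i j : ι} (hij : Λ i < Λ j) :
    ⟪e i, h.symm (e j)⟫ = 0 := by
  rw [inner_basis_symm_apply_basis he hdense hσ hεσ hε hΦ hO,
    hh _ _ (by rw [hΛσ, hΛσ]; exact neg_lt_neg hij), mul_zero]

end SignedInvolution

section Witt

def wittSwap (p i : ℕ) : ℕ := if i < p then p + i else if i < 2 * p then i - p else i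

def wittSign (p i : ℕ) : ℝ := if i < 2 * p then 1 else -1

theorem wittSwap_involutive (p : ℕ) : Function.Involutive (wittSwap p) := by
  intro i
  unfold wittSwap
  split_ifs <;> omega

theorem wittSign_wittSwap (p i : ℕ) : wittSign p (wittSwap p i) = wittSign p i := by
  unfold wittSign wittSwap
  split_ifs <;> first | rfl | omega

theorem wittSign_mul_self (p i : ℕ) : wittSign p i * wittSign p i = 1 := by
  unfold wittSign
  split_ifs <;> norm_num

theorem weight_wittSwap {p : ℕ} {lam : Fin p → ℝ} {Λ : ℕ → ℝ}
    (hΛ₁ : ∀ i : Fin p, Λ (i : ℕ) = lam i) (hΛ₂ : ∀ i : Fin p, Λ (p + (i : ℕ)) = - lam i)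
    (hΛ₃ : ∀ i : ℕ, 2 * p ≤ i → Λ i = 0) (i : ℕ) : Λ (wittSwap p i) = -Λ i := by
  rcases lt_or_ge i p with hp | hp
  · simp [wittSwap, hp, hΛ₁ ⟨i, hp⟩, hΛ₂ ⟨i, hp⟩]
  rcases lt_or_ge i (2 * p) with h2p | h2p
  · obtain ⟨k, rfl⟩ : ∃ k, i = p + k := ⟨i - p, by omega⟩
    simp [wittSwap, h2p, hΛ₁ ⟨k, by omega⟩, hΛ₂ ⟨k, by omega⟩]
  · simp [wittSwap, hΛ₃ i h2p, show ¬i < p by omega, show ¬i < 2 * p by omega]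

theorem apply_basis_eq_wittSign_smul {H : Type*} [NormedAddCommGroup H] [Module ℝ H]
    {p : ℕ} {e' : ℕ → H} {Φ : H →L[ℝ] H}
    (hΦ₁ : ∀ i : Fin p, Φ (e' (i : ℕ)) = e' (p + (i : ℕ)))
    (hΦ₂ : ∀ i : Fin p, Φ (e' (p + (i : ℕ))) = e' (i : ℕ))
    (hΦ₃ : ∀ i : ℕ, 2 * p ≤ i → Φ (e' i) = - e' i) (i : ℕ) :
    Φ (e' i) = wittSign p i • e' (wittSwap p i) := by
  rcases lt_or_ge i p with hp | hp
  · simp [wittSign, wittSwap, hp, show i < 2 * p by omega, hΦ₁ ⟨i, hp⟩]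
  rcases lt_or_ge i (2 * p) with h2p | h2p
  · obtain ⟨k, rfl⟩ : ∃ k, i = p + k := ⟨i - p, by omega⟩
    simp [wittSign, wittSwap, h2p, hΦ₂ ⟨k, by omega⟩]
  · simp [wittSign, wittSwap, hΦ₃ i h2p, show ¬i < p by omega, show ¬i < 2 * p by omega]

end Witt

theorem finite_range_of_eq_zero_of_le {Λ : ℕ → ℝ} {N : ℕ} (hΛ : ∀ i, N ≤ i → Λ i = 0) :
    (Set.range Λ).Finite := by
  refine ((Set.finite_Iic N).image Λ).subset ?_
  rintro _ ⟨i, rfl⟩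
  rcases le_total i N with hi | hi
  · exact ⟨i, hi, rfl⟩
  · exact ⟨N, Set.mem_Iic.mpr le_rfl, by rw [hΛ i hi, hΛ N le_rfl]⟩

theorem stmt16_general {H : Type*} [NormedAddCommGroup H] [InnerProductSpace ℝ H]
    [CompleteSpace H]
    (p : ℕ) (e' : ℕ → H) (he : Orthonormal ℝ e')
    (hdense : (Submodule.span ℝ (Set.range e')).topologicalClosure = ⊤)
    (lam : Fin p → ℝ)
    (Λ : ℕ → ℝ)
    (hΛ₁ : ∀ i : Fin p, Λ (i : ℕ) = lam i)
    (hΛ₂ : ∀ i : Fin p, Λ (p + (i : ℕ)) = - lam i)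
    (hΛ₃ : ∀ i : ℕ, 2 * p ≤ i → Λ i = 0)
    (Φ : H →L[ℝ] H)
    (hΦ₁ : ∀ i : Fin p, Φ (e' (i : ℕ)) = e' (p + (i : ℕ)))
    (hΦ₂ : ∀ i : Fin p, Φ (e' (p + (i : ℕ))) = e' (i : ℕ))
    (hΦ₃ : ∀ i : ℕ, 2 * p ≤ i → Φ (e' i) = - e' i)
    (g : ℝ → (H ≃L[ℝ] H))
    (hg : ∀ t : ℝ, ∀ i : ℕ, g t (e' i) = Real.exp (t * Λ i) • e' i)
    (h : H ≃L[ℝ] H)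
    (hO : ∀ u v : H, ⟪h u, Φ (h v)⟫ = ⟪u, Φ v⟫) :
    (∃ C : ℝ, ∀ t : ℝ, 0 ≤ t →
        ‖(((g t).symm : H →L[ℝ] H).comp
          ((h : H →L[ℝ] H).comp ((g t : H ≃L[ℝ] H) : H →L[ℝ] H)))‖ ≤ C) ↔
    ((∀ i j : ℕ, Λ i < Λ j → ⟪e' i, h (e' j)⟫ = 0) ∧
     (∀ i j : ℕ, Λ i < Λ j → ⟪e' i, h.symm (e' j)⟫ = 0)) := by
  rw [exists_norm_conj_le_iff he hdense hg (h : H →L[ℝ] H) (finite_range_of_eq_zero_of_le hΛ₃)]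
  refine ⟨fun hh => ⟨hh, fun i j hij => ?_⟩, And.left⟩
  exact inner_basis_symm_apply_basis_eq_zero he hdense (wittSwap_involutive p)
    (wittSign_wittSwap p) (wittSign_mul_self p) (apply_basis_eq_wittSign_smul hΦ₁ hΦ₂ hΦ₃) hO
    (weight_wittSwap hΛ₁ hΛ₂ hΛ₃) hh hij

/-- Boundedness of conjugates by the transvection semigroup characterizes block
triangularity: for `h ∈ O(p,∞)` written in a Witt (hyperbolic) Hilbert basis
`e'` in which `Φ` has block form `[[0, Iₚ, 0], [Iₚ, 0, 0], [0, 0, -I]]`, and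
`g t = diag (e^{tλ}, e^{-tλ}, I)` (with weights `Λ i = λ i`, `Λ (p+i) = -λ i`,
`Λ i = 0` for `i ≥ 2p`, where `λ₁ ≥ … ≥ λₚ ≥ 0`), the family
`{‖(g t)⁻¹ h (g t)‖ : t ≥ 0}` is bounded if and only if all matrix entries
`⟪e' i, h (e' j)⟫` with `Λ i < Λ j` vanish (block upper-triangularity of `h₁`
along the level sets of `λ`, vanishing of `h₄` off entries with
`λ i = λ j = 0`, vanishing of the columns of `h₇` with `λ j > 0`), together
with the analogous conditions for `h⁻¹`. -/
theorem stmt16 {H : Type*} [NormedAddCommGroup H] [InnerProductSpace ℝ H]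
    [CompleteSpace H] [TopologicalSpace.SeparableSpace H]
    (p : ℕ) (e' : ℕ → H) (he : Orthonormal ℝ e')
    (hdense : (Submodule.span ℝ (Set.range e')).topologicalClosure = ⊤)
    (lam : Fin p → ℝ) (hmono : Antitone lam) (hnn : ∀ i, 0 ≤ lam i)
    (Λ : ℕ → ℝ)
    (hΛ₁ : ∀ i : Fin p, Λ (i : ℕ) = lam i)
    (hΛ₂ : ∀ i : Fin p, Λ (p + (i : ℕ)) = - lam i)
    (hΛ₃ : ∀ i : ℕ, 2 * p ≤ i → Λ i = 0)
    (Φ : H →L[ℝ] H)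
    (hΦ₁ : ∀ i : Fin p, Φ (e' (i : ℕ)) = e' (p + (i : ℕ)))
    (hΦ₂ : ∀ i : Fin p, Φ (e' (p + (i : ℕ))) = e' (i : ℕ))
    (hΦ₃ : ∀ i : ℕ, 2 * p ≤ i → Φ (e' i) = - e' i)
    (g : ℝ → (H ≃L[ℝ] H))
    (hg : ∀ t : ℝ, ∀ i : ℕ, g t (e' i) = Real.exp (t * Λ i) • e' i)
    (h : H ≃L[ℝ] H)
    (hO : ∀ u v : H, ⟪h u, Φ (h v)⟫ = ⟪u, Φ v⟫) :
    (∃ C : ℝ, ∀ t : ℝ, 0 ≤ t →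
        ‖(((g t).symm : H →L[ℝ] H).comp
          ((h : H →L[ℝ] H).comp ((g t : H ≃L[ℝ] H) : H →L[ℝ] H)))‖ ≤ C) ↔
    ((∀ i j : ℕ, Λ i < Λ j → ⟪e' i, h (e' j)⟫ = 0) ∧
     (∀ i j : ℕ, Λ i < Λ j → ⟪e' i, h.symm (e' j)⟫ = 0)) :=
  stmt16_general p e' he hdense lam Λ hΛ₁ hΛ₂ hΛ₃ Φ hΦ₁ hΦ₂ hΦ₃ g hg h hO
end
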